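/- Fix a real k > −1 and let a < b be consecutive positive zeros of J_{k+1}. Let c ∈ (a,b) satisfy J_k(c) = 0, and suppose c < 2·√((k+1)(k+2)). Then there exist unique d, e ∈ (a,b) with J_{k+2}(d) = 0 and J_{k+3}(e) = 0, and they satisfy a < d < e < c < b. -/

import Mathlib

/-!
Write `J_ν(r) = (r/2)^ν S_ν((r/2)²)` with the entire series `S_ν(x) = ∑ (-1)^m x^m / (m! Γ(m+ν+1))`.
Comparing coefficients gives `S_ν' = -S_{ν+1}` and `S_ν + x S_{ν+2} = (ν+1) S_{ν+1}`, hence the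
classical identities `(r^{ν+1} J_{ν+1})' = r · r^ν J_ν`, `(r^{-ν} J_ν)' = -r^{-ν} J_{ν+1}` and
`r (J_ν + J_{ν+2}) = 2(ν+1) J_{ν+1}`.

Let `ε` be the sign of `J_{k+1}` on `(a, b)` and `w_ν(r) = ε r^ν J_ν(r)`. Since
`w_{k+2}' = r w_{k+1} > 0`, `w_{k+2}` increases; it is negative at `a` (otherwise
`ε r^{-(k+1)} J_{k+1}` would decrease from `0` on `(a, b)`), and positive at `c` by the recurrence,
which gives `d`. Then `w_{k+3}' = r w_{k+2}` changes sign only at `d`, while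
`w_{k+3}(a) = 2(k+2) w_{k+2}(a) < 0` and `w_{k+3}(c) = (4(k+1)(k+2) - c²) w_{k+1}(c) > 0`,
which gives `e ∈ (d, c)`.
-/

open Real

/-- Bessel function of the first kind of real order `k`, defined by its power series
(valid for `r > 0`, using real powers). -/
noncomputable def besselJ (k r : ℝ) : ℝ :=
  ∑' m : ℕ, ((-1 : ℝ) ^ m / (m.factorial * Real.Gamma (m + k + 1))) * (r / 2) ^ ((2 * m : ℝ) + k)

open Set Filter Topology
open scoped Nat

theorem exists_mul_pos_of_ne_zero {f : ℝ → ℝ} {s : Set ℝ} (hs : IsPreconnected s)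
    (hf : ContinuousOn f s) (hf₀ : ∀ x ∈ s, f x ≠ 0) : ∃ ε : ℝ, ∀ x ∈ s, 0 < ε * f x := by
  rcases s.eq_empty_or_nonempty with rfl | ⟨x₀, hx₀⟩
  · exact ⟨1, by simp⟩
  refine ⟨f x₀, fun x hx => lt_of_le_of_ne ?_ (mul_ne_zero (hf₀ x₀ hx₀) (hf₀ x hx)).symm⟩
  by_contra! hneg
  obtain ⟨z, hz, hfz⟩ : (0 : ℝ) ∈ f '' s := by
    rcases mul_neg_iff.mp hneg with ⟨h₀, h⟩ | ⟨h₀, h⟩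
    · exact hs.intermediate_value hx hx₀ hf ⟨h.le, h₀.le⟩
    · exact hs.intermediate_value hx₀ hx hf ⟨h₀.le, h.le⟩
  exact hf₀ z hz hfz

theorem strictMonoOn_Icc_of_hasDerivAt_pos {f f' : ℝ → ℝ} {p q : ℝ}
    (hf : ∀ x ∈ Icc p q, HasDerivAt f (f' x) x) (hf' : ∀ x ∈ Ioo p q, 0 < f' x) :
    StrictMonoOn f (Icc p q) :=
  strictMonoOn_of_deriv_pos (convex_Icc p q)
    (fun x hx => (hf x hx).continuousAt.continuousWithinAt) fun x hx => by
      rw [interior_Icc] at hx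
      rw [(hf x (Ioo_subset_Icc_self hx)).deriv]
      exact hf' x hx

theorem strictAntiOn_Icc_of_hasDerivAt_neg {f f' : ℝ → ℝ} {p q : ℝ}
    (hf : ∀ x ∈ Icc p q, HasDerivAt f (f' x) x) (hf' : ∀ x ∈ Ioo p q, f' x < 0) :
    StrictAntiOn f (Icc p q) :=
  strictAntiOn_of_deriv_neg (convex_Icc p q)
    (fun x hx => (hf x hx).continuousAt.continuousWithinAt) fun x hx => by
      rw [interior_Icc] at hx
      rw [(hf x (Ioo_subset_Icc_self hx)).deriv]
      exact hf' x hx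

theorem exists_unique_zero_of_strictAntiOn_of_strictMonoOn {F : ℝ → ℝ} {p d c q : ℝ} (hpd : p ≤ d)
    (hdc : d < c) (hcq : c ≤ q) (hF : ContinuousOn F (Icc p q))
    (hanti : StrictAntiOn F (Icc p d)) (hmono : StrictMonoOn F (Icc d q))
    (hp : F p < 0) (hc : 0 < F c) :
    ∃ e ∈ Ioo d c, F e = 0 ∧ ∀ z ∈ Icc p q, F z = 0 → z = e := by
  have hle : ∀ z ∈ Icc p d, F z ≤ F p := fun z hz =>
    hanti.antitoneOn ⟨le_rfl, hpd⟩ hz hz.1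
  obtain ⟨e, he, hFe⟩ := intermediate_value_Ioo hdc.le (hF.mono (Icc_subset_Icc hpd hcq))
    ⟨(hle d ⟨hpd, le_rfl⟩).trans_lt hp, hc⟩
  refine ⟨e, he, hFe, fun z hz hFz => ?_⟩
  rcases le_or_gt z d with hzd | hdz
  · exact absurd hFz ((hle z ⟨hz.1, hzd⟩).trans_lt hp).ne
  · exact hmono.injOn ⟨hdz.le, hz.2⟩ ⟨he.1.le, he.2.le.trans hcq⟩ (hFz.trans hFe.symm)

theorem exists_unique_zeros_of_hasDerivAt_mul {w₁ w₂ w₃ : ℝ → ℝ} {a b c : ℝ} (ha : 0 < a)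
    (hc : c ∈ Ioo a b) (hw₂ : ∀ r ∈ Icc a b, HasDerivAt w₂ (r * w₁ r) r)
    (hw₃ : ∀ r ∈ Icc a b, HasDerivAt w₃ (r * w₂ r) r) (hw₁ : ∀ r ∈ Ioo a b, 0 < w₁ r)
    (hw₂a : w₂ a < 0) (hw₂c : 0 < w₂ c) (hw₃a : w₃ a < 0) (hw₃c : 0 < w₃ c) :
    ∃ d ∈ Ioo a c, ∃ e ∈ Ioo d c, w₂ d = 0 ∧ w₃ e = 0 ∧
      (∀ z ∈ Icc a b, w₂ z = 0 → z = d) ∧ ∀ z ∈ Icc a b, w₃ z = 0 → z = e := by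
  have hmono₂ : StrictMonoOn w₂ (Icc a b) :=
    strictMonoOn_Icc_of_hasDerivAt_pos hw₂ fun r hr => mul_pos (ha.trans hr.1) (hw₁ r hr)
  obtain ⟨d, hd, hw₂d, hd_uniq⟩ := exists_unique_zero_of_strictAntiOn_of_strictMonoOn le_rfl hc.1
    hc.2.le (fun r hr => (hw₂ r hr).continuousAt.continuousWithinAt)
    (by simp only [Icc_self, strictAntiOn_singleton]) hmono₂ hw₂a hw₂c
  have hdb : d < b := hd.2.trans hc.2
  have hanti₃ : StrictAntiOn w₃ (Icc a d) :=
    strictAntiOn_Icc_of_hasDerivAt_neg (fun r hr => hw₃ r ⟨hr.1, hr.2.trans hdb.le⟩)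
      fun r hr => mul_neg_of_pos_of_neg (ha.trans hr.1) (hw₂d ▸
        hmono₂ ⟨hr.1.le, (hr.2.trans hdb).le⟩ ⟨hd.1.le, hdb.le⟩ hr.2)
  have hmono₃ : StrictMonoOn w₃ (Icc d b) :=
    strictMonoOn_Icc_of_hasDerivAt_pos (fun r hr => hw₃ r ⟨hd.1.le.trans hr.1, hr.2⟩)
      fun r hr => mul_pos (ha.trans (hd.1.trans hr.1)) (hw₂d ▸
        hmono₂ ⟨hd.1.le, hdb.le⟩ ⟨(hd.1.trans hr.1).le, hr.2.le⟩ hr.1)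
  obtain ⟨e, he, hw₃e, he_uniq⟩ := exists_unique_zero_of_strictAntiOn_of_strictMonoOn hd.1.le hd.2
    hc.2.le (fun r hr => (hw₃ r hr).continuousAt.continuousWithinAt) hanti₃ hmono₃ hw₃a hw₃c
  exact ⟨d, hd, e, he, hw₂d, hw₃e, hd_uniq, he_uniq⟩

noncomputable def besselCoeff (ν : ℝ) (m : ℕ) : ℝ := (-1) ^ m / (m ! * Gamma (m + ν + 1))

noncomputable def besselSeries (ν x : ℝ) : ℝ := ∑' m, besselCoeff ν m * x ^ m

theorem besselJ_eq_rpow_mul_besselSeries (ν : ℝ) {r : ℝ} (hr : 0 < r) :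
    besselJ ν r = (r / 2) ^ ν * besselSeries ν ((r / 2) ^ 2) := by
  rw [besselJ, besselSeries, ← tsum_mul_left]
  congr 1 with m
  rw [rpow_add (by positivity), show (2 * m : ℝ) = ((2 * m : ℕ) : ℝ) by push_cast; ring,
    rpow_natCast, pow_mul, besselCoeff]
  ring

theorem succ_mul_besselCoeff_succ (ν : ℝ) (m : ℕ) :
    ((m : ℝ) + 1) * besselCoeff ν (m + 1) = -besselCoeff (ν + 1) m := by
  have hm : (m : ℝ) + 1 ≠ 0 := by positivity
  rw [besselCoeff, besselCoeff, Nat.factorial_succ, pow_succ, Nat.cast_mul, Nat.cast_succ,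
    show (m : ℝ) + 1 + ν + 1 = m + (ν + 1) + 1 by ring, mul_assoc,
    mul_div_assoc', mul_div_mul_left _ _ hm]
  ring

theorem besselCoeff_eq_mul_besselCoeff_add_one {ν : ℝ} (hν : -1 < ν) (m : ℕ) :
    besselCoeff ν m = (m + ν + 1) * besselCoeff (ν + 1) m := by
  have hpos : 0 < (m : ℝ) + ν + 1 := by linarith [(m.cast_nonneg : (0 : ℝ) ≤ m)]
  have hΓ : 0 < Gamma (m + ν + 1) := Gamma_pos_of_pos hpos
  rw [besselCoeff, besselCoeff, show (m : ℝ) + (ν + 1) + 1 = (m + ν + 1) + 1 by ring,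
    Gamma_add_one hpos.ne']
  field_simp

theorem besselCoeff_succ {ν : ℝ} (hν : -1 < ν) (m : ℕ) :
    besselCoeff ν (m + 1) = -besselCoeff ν m / ((m + 1) * (m + ν + 1)) := by
  have hpos : 0 < (m : ℝ) + ν + 1 := by linarith [(m.cast_nonneg : (0 : ℝ) ≤ m)]
  have h := succ_mul_besselCoeff_succ ν m
  rw [besselCoeff_eq_mul_besselCoeff_add_one hν m]
  field_simp
  linarith

theorem summable_norm_besselCoeff_mul_pow {ν : ℝ} (hν : -1 < ν) (x : ℝ) :
    Summable fun m => ‖besselCoeff ν m * x ^ m‖ := by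
  refine summable_of_ratio_norm_eventually_le (r := 1 / 2) (by norm_num) ?_
  obtain ⟨N, hN⟩ := exists_nat_ge (2 * |x|)
  filter_upwards [eventually_ge_atTop N] with m hm
  have hmN : (N : ℝ) ≤ m := by exact_mod_cast hm
  have hν' : 0 < (m : ℝ) + ν + 1 := by linarith [(m.cast_nonneg : (0 : ℝ) ≤ m)]
  have hpos : 0 < ((m : ℝ) + 1) * (m + ν + 1) := by positivity
  have hratio : |x| / ((m + 1) * (m + ν + 1)) ≤ 1 / 2 := by
    rw [div_le_iff₀ (by positivity)]
    nlinarith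
  calc ‖‖besselCoeff ν (m + 1) * x ^ (m + 1)‖‖
      = |x| / ((m + 1) * (m + ν + 1)) * ‖besselCoeff ν m * x ^ m‖ := by
        rw [norm_norm, besselCoeff_succ hν, pow_succ, norm_mul, norm_mul, norm_mul, norm_div,
          norm_neg, Real.norm_of_nonneg hpos.le, Real.norm_eq_abs x]
        ring
    _ ≤ 1 / 2 * ‖‖besselCoeff ν m * x ^ m‖‖ := by
        rw [norm_norm]; gcongr

theorem summable_besselCoeff_mul_pow {ν : ℝ} (hν : -1 < ν) (x : ℝ) :
    Summable fun m => besselCoeff ν m * x ^ m :=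
  (summable_norm_besselCoeff_mul_pow hν x).of_norm

theorem hasDerivAt_besselSeries {ν : ℝ} (hν : -1 < ν) (x : ℝ) :
    HasDerivAt (besselSeries ν) (-besselSeries (ν + 1) x) x := by
  have hsplit : besselSeries ν =
      fun y => besselCoeff ν 0 + ∑' m, besselCoeff ν (m + 1) * y ^ (m + 1) := by
    funext y
    rw [besselSeries, (summable_besselCoeff_mul_pow hν y).tsum_eq_zero_add, pow_zero, mul_one]
  have hterm : ∀ (m : ℕ) (y : ℝ), HasDerivAt (fun y => besselCoeff ν (m + 1) * y ^ (m + 1))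
      (-(besselCoeff (ν + 1) m * y ^ m)) y := by
    intro m y
    refine ((hasDerivAt_pow (m + 1) y).const_mul _).congr_deriv ?_
    rw [Nat.add_sub_cancel, ← neg_mul, ← succ_mul_besselCoeff_succ, Nat.cast_succ]
    ring
  set R := |x| + 1
  have hR : 0 < R := by positivity
  have hbound : ∀ (m : ℕ), ∀ y ∈ Ioo (-R) R,
      ‖-(besselCoeff (ν + 1) m * y ^ m)‖ ≤ ‖besselCoeff (ν + 1) m * R ^ m‖ := by
    intro m y hy
    rw [norm_neg, norm_mul, norm_mul, norm_pow, norm_pow, Real.norm_of_nonneg hR.le]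
    gcongr
    exact abs_le.mpr ⟨hy.1.le, hy.2.le⟩
  have hx : x ∈ Ioo (-R) R := abs_lt.mp (by simp [R])
  rw [hsplit, besselSeries, ← tsum_neg]
  exact (hasDerivAt_tsum_of_isPreconnected (summable_norm_besselCoeff_mul_pow (by linarith) R)
    isOpen_Ioo isPreconnected_Ioo (fun m y _ => hterm m y) hbound (y₀ := 0) ⟨by linarith, hR⟩
    (by simp) hx).const_add _

theorem besselSeries_add_mul_besselSeries_add_two {ν : ℝ} (hν : -1 < ν) (x : ℝ) :
    besselSeries ν x + x * besselSeries (ν + 2) x = (ν + 1) * besselSeries (ν + 1) x := by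
  have hcoeff : ∀ m : ℕ,
      besselCoeff ν (m + 1) * x ^ (m + 1) + x * (besselCoeff (ν + 2) m * x ^ m) =
        (ν + 1) * (besselCoeff (ν + 1) (m + 1) * x ^ (m + 1)) := by
    intro m
    have h1 := besselCoeff_eq_mul_besselCoeff_add_one hν (m + 1)
    have h2 := succ_mul_besselCoeff_succ (ν + 1) m
    rw [show ν + 1 + 1 = ν + 2 by ring] at h2
    push_cast at h1
    linear_combination (x ^ (m + 1)) * (h1 + h2)
  have hsummable := summable_besselCoeff_mul_pow hν x
  rw [besselSeries, besselSeries, besselSeries, hsummable.tsum_eq_zero_add,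
    (summable_besselCoeff_mul_pow (ν := ν + 1) (by linarith) x).tsum_eq_zero_add,
    ← tsum_mul_left, mul_add, ← tsum_mul_left, add_assoc,
    ← Summable.tsum_add ((summable_nat_add_iff 1).mpr hsummable)
      ((summable_besselCoeff_mul_pow (by linarith) x).mul_left x), tsum_congr hcoeff,
    besselCoeff_eq_mul_besselCoeff_add_one hν 0]
  simp

theorem hasDerivAt_besselJ {ν r : ℝ} (hν : -1 < ν) (hr : 0 < r) :
    HasDerivAt (besselJ ν) (ν / r * besselJ ν r - besselJ (ν + 1) r) r := by
  have hr2 : 0 < r / 2 := by positivity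
  have hhalf : HasDerivAt (fun s : ℝ => s / 2) (1 / 2) r := by
    simpa using (hasDerivAt_id r).div_const 2
  have hpow := (hasDerivAt_rpow_const (p := ν) (Or.inl hr2.ne')).comp r hhalf
  have hseries := (hasDerivAt_besselSeries hν ((r / 2) ^ 2)).comp r (hhalf.pow 2)
  have heq : besselJ ν =ᶠ[𝓝 r] fun s => (s / 2) ^ ν * besselSeries ν ((s / 2) ^ 2) :=
    eventually_of_mem (Ioi_mem_nhds hr) fun s hs => besselJ_eq_rpow_mul_besselSeries ν hs
  refine ((hpow.mul hseries).congr_of_eventuallyEq heq).congr_deriv ?_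
  simp only [Function.comp_apply, Pi.pow_apply]
  rw [besselJ_eq_rpow_mul_besselSeries ν hr, besselJ_eq_rpow_mul_besselSeries (ν + 1) hr,
    rpow_add_one hr2.ne', rpow_sub_one hr2.ne']
  generalize (r / 2) ^ 2 = x
  field_simp
  ring

theorem besselJ_recurrence {ν r : ℝ} (hν : -1 < ν) (hr : 0 < r) :
    r * (besselJ ν r + besselJ (ν + 2) r) = 2 * (ν + 1) * besselJ (ν + 1) r := by
  have hr2 : 0 < r / 2 := by positivity
  have h := besselSeries_add_mul_besselSeries_add_two hν ((r / 2) ^ 2)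
  rw [besselJ_eq_rpow_mul_besselSeries ν hr, besselJ_eq_rpow_mul_besselSeries (ν + 2) hr,
    besselJ_eq_rpow_mul_besselSeries (ν + 1) hr, rpow_add hr2, rpow_add_one hr2.ne', rpow_two]
  generalize (r / 2) ^ 2 = x at h ⊢
  linear_combination r * (r / 2) ^ ν * h

noncomputable def rpowMulBesselJ (ν r : ℝ) : ℝ := r ^ ν * besselJ ν r

theorem rpowMulBesselJ_eq_zero_iff {ν r : ℝ} (hr : 0 < r) :
    rpowMulBesselJ ν r = 0 ↔ besselJ ν r = 0 := by
  simp [rpowMulBesselJ, (rpow_pos_of_pos hr ν).ne']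

theorem hasDerivAt_rpowMulBesselJ {ν r : ℝ} (hν : -1 < ν) (hr : 0 < r) :
    HasDerivAt (rpowMulBesselJ (ν + 1)) (r * rpowMulBesselJ ν r) r := by
  refine ((hasDerivAt_rpow_const (Or.inl hr.ne')).mul
    (hasDerivAt_besselJ (by linarith) hr)).congr_deriv ?_
  have hrec := besselJ_recurrence hν hr
  rw [rpowMulBesselJ, add_sub_cancel_right, show ν + 1 + 1 = ν + 2 by ring, rpow_add_one hr.ne']
  field_simp
  linear_combination -hrec

theorem rpowMulBesselJ_recurrence {ν r : ℝ} (hν : -1 < ν) (hr : 0 < r) :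
    r ^ 2 * rpowMulBesselJ ν r + rpowMulBesselJ (ν + 2) r =
      2 * (ν + 1) * rpowMulBesselJ (ν + 1) r := by
  rw [rpowMulBesselJ, rpowMulBesselJ, rpowMulBesselJ, rpow_add hr, rpow_add_one hr.ne', rpow_two]
  linear_combination r ^ ν * r * besselJ_recurrence hν hr

theorem hasDerivAt_rpow_neg_mul_besselJ {ν r : ℝ} (hν : -1 < ν) (hr : 0 < r) :
    HasDerivAt (fun s => s ^ (-ν) * besselJ ν s) (-(r ^ (-ν) * besselJ (ν + 1) r)) r := by
  refine ((hasDerivAt_rpow_const (Or.inl hr.ne')).mul (hasDerivAt_besselJ hν hr)).congr_deriv ?_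
  rw [rpow_sub_one hr.ne']
  field_simp
  ring

theorem mul_besselJ_add_one_neg {ν a b ε : ℝ} (hν : -1 < ν) (ha : 0 < a) (hab : a < b)
    (hza : besselJ ν a = 0) (hpos : ∀ r ∈ Ioo a b, 0 < ε * besselJ ν r) :
    ε * besselJ (ν + 1) a < 0 := by
  by_contra! hnonneg
  have hr₀ : ∀ r ∈ Icc a b, 0 < r := fun r hr => ha.trans_le hr.1
  have hmono : StrictMonoOn (fun r => ε * rpowMulBesselJ (ν + 1) r) (Icc a b) :=
    strictMonoOn_Icc_of_hasDerivAt_pos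
      (fun r hr => (hasDerivAt_rpowMulBesselJ hν (hr₀ r hr)).const_mul ε) fun r hr => by
        have h₀ := hr₀ r (Ioo_subset_Icc_self hr)
        rw [rpowMulBesselJ, mul_left_comm, mul_left_comm ε]
        exact mul_pos h₀ (mul_pos (rpow_pos_of_pos h₀ ν) (hpos r hr))
  have hpos₁ : ∀ r ∈ Ioo a b, 0 < ε * besselJ (ν + 1) r := fun r hr => by
    have h := hmono (left_mem_Icc.mpr hab.le) (Ioo_subset_Icc_self hr) hr.1
    simp only [rpowMulBesselJ, mul_left_comm ε] at h
    exact pos_of_mul_pos_right ((mul_nonneg (rpow_pos_of_pos ha _).le hnonneg).trans_lt h)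
      (rpow_pos_of_pos (ha.trans hr.1) _).le
  have hanti : StrictAntiOn (fun r => ε * (r ^ (-ν) * besselJ ν r)) (Icc a b) :=
    strictAntiOn_Icc_of_hasDerivAt_neg
      (fun r hr => (hasDerivAt_rpow_neg_mul_besselJ hν (hr₀ r hr)).const_mul ε) fun r hr => by
        rw [mul_neg, neg_lt_zero, mul_left_comm]
        exact mul_pos (rpow_pos_of_pos (hr₀ r (Ioo_subset_Icc_self hr)) _) (hpos₁ r hr)
  have hmid : (a + b) / 2 ∈ Ioo a b := ⟨by linarith, by linarith⟩
  have h := hanti (left_mem_Icc.mpr hab.le) (Ioo_subset_Icc_self hmid) hmid.1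
  simp only [hza, mul_zero, mul_left_comm ε] at h
  exact h.not_gt (mul_pos (rpow_pos_of_pos (ha.trans hmid.1) _) (hpos _ hmid))

theorem mul_rpowMulBesselJ_signs {k a b c ε : ℝ} (hk : -1 < k) (ha : 0 < a)
    (hza : besselJ (k + 1) a = 0) (hpos : ∀ r ∈ Ioo a b, 0 < ε * besselJ (k + 1) r)
    (hc : c ∈ Ioo a b) (hzc : besselJ k c = 0) (hcr : c ^ 2 < 4 * ((k + 1) * (k + 2))) :
    ε * rpowMulBesselJ (k + 2) a < 0 ∧ 0 < ε * rpowMulBesselJ (k + 2) c ∧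
      ε * rpowMulBesselJ (k + 3) a < 0 ∧ 0 < ε * rpowMulBesselJ (k + 3) c := by
  have hc₀ : 0 < c := ha.trans hc.1
  have hrec₂c := rpowMulBesselJ_recurrence hk hc₀
  have hrec₃a := rpowMulBesselJ_recurrence (ν := k + 1) (by linarith) ha
  have hrec₃c := rpowMulBesselJ_recurrence (ν := k + 1) (by linarith) hc₀
  rw [show k + 1 + 2 = k + 3 by ring, show k + 1 + 1 = k + 2 by ring] at hrec₃a hrec₃c
  rw [rpowMulBesselJ_eq_zero_iff hc₀ |>.mpr hzc] at hrec₂c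
  rw [rpowMulBesselJ_eq_zero_iff ha |>.mpr hza] at hrec₃a
  have h₁c : 0 < ε * rpowMulBesselJ (k + 1) c := by
    rw [rpowMulBesselJ, mul_left_comm]
    exact mul_pos (rpow_pos_of_pos hc₀ _) (hpos c hc)
  have h₂a : ε * rpowMulBesselJ (k + 2) a < 0 := by
    rw [rpowMulBesselJ, mul_left_comm, show k + 2 = k + 1 + 1 by ring]
    exact mul_neg_of_pos_of_neg (rpow_pos_of_pos ha _)
      (mul_besselJ_add_one_neg (by linarith) ha (hc.1.trans hc.2) hza hpos)
  have h₂c : ε * rpowMulBesselJ (k + 2) c = 2 * (k + 1) * (ε * rpowMulBesselJ (k + 1) c) := by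
    linear_combination ε * hrec₂c
  have h₃a : ε * rpowMulBesselJ (k + 3) a = 2 * (k + 2) * (ε * rpowMulBesselJ (k + 2) a) := by
    linear_combination ε * hrec₃a
  refine ⟨h₂a, ?_, ?_, ?_⟩
  · rw [h₂c]
    exact mul_pos (by linarith) h₁c
  · rw [h₃a]
    exact mul_neg_of_pos_of_neg (by linarith) h₂a
  · have h₃c : ε * rpowMulBesselJ (k + 3) c =
        (4 * ((k + 1) * (k + 2)) - c ^ 2) * (ε * rpowMulBesselJ (k + 1) c) := by
      linear_combination ε * (hrec₃c + 2 * (k + 2) * hrec₂c)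
    rw [h₃c]
    exact mul_pos (by linarith) h₁c

theorem besselJ_interlacing_of_mul_pos {k a b c ε : ℝ} (hk : -1 < k) (ha : 0 < a)
    (hza : besselJ (k + 1) a = 0) (hpos : ∀ r ∈ Ioo a b, 0 < ε * besselJ (k + 1) r)
    (hc : c ∈ Ioo a b) (hzc : besselJ k c = 0) (hcr : c ^ 2 < 4 * ((k + 1) * (k + 2))) :
    ∃ d ∈ Ioo a c, ∃ e ∈ Ioo d c, besselJ (k + 2) d = 0 ∧ besselJ (k + 3) e = 0 ∧
      (∀ z ∈ Ioo a b, besselJ (k + 2) z = 0 → z = d) ∧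
      ∀ z ∈ Ioo a b, besselJ (k + 3) z = 0 → z = e := by
  have hr₀ : ∀ r ∈ Icc a b, 0 < r := fun r hr => ha.trans_le hr.1
  have hderiv : ∀ ν, -1 < ν → ∀ r ∈ Icc a b,
      HasDerivAt (fun s => ε * rpowMulBesselJ (ν + 1) s) (r * (ε * rpowMulBesselJ ν r)) r :=
    fun ν hν r hr => ((hasDerivAt_rpowMulBesselJ hν (hr₀ r hr)).const_mul ε).congr_deriv
      (by ring)
  have hzero : ∀ ν, ∀ z ∈ Icc a b, ε * rpowMulBesselJ ν z = 0 → besselJ ν z = 0 :=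
    fun ν z hz h => (rpowMulBesselJ_eq_zero_iff (hr₀ z hz)).mp
      ((mul_eq_zero.mp h).resolve_left (left_ne_zero_of_mul (hpos c hc).ne'))
  obtain ⟨h₂a, h₂c, h₃a, h₃c⟩ := mul_rpowMulBesselJ_signs hk ha hza hpos hc hzc hcr
  obtain ⟨d, hd, e, he, h₂d, h₃e, hd_uniq, he_uniq⟩ := exists_unique_zeros_of_hasDerivAt_mul
    (w₁ := fun r => ε * rpowMulBesselJ (k + 1) r) (w₂ := fun r => ε * rpowMulBesselJ (k + 2) r)
    (w₃ := fun r => ε * rpowMulBesselJ (k + 3) r) ha hc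
    (fun r hr => by
      simpa only [show k + 1 + 1 = k + 2 by ring] using hderiv (k + 1) (by linarith) r hr)
    (fun r hr => by
      simpa only [show k + 2 + 1 = k + 3 by ring] using hderiv (k + 2) (by linarith) r hr)
    (fun r hr => by
      rw [rpowMulBesselJ, mul_left_comm]
      exact mul_pos (rpow_pos_of_pos (hr₀ r (Ioo_subset_Icc_self hr)) _) (hpos r hr))
    h₂a h₂c h₃a h₃c
  have hdI : d ∈ Icc a b := ⟨hd.1.le, (hd.2.trans hc.2).le⟩
  have heI : e ∈ Icc a b := ⟨(hd.1.trans he.1).le, (he.2.trans hc.2).le⟩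
  refine ⟨d, hd, e, he, hzero _ d hdI h₂d, hzero _ e heI h₃e, fun z hz hJz => ?_,
    fun z hz hJz => ?_⟩
  · exact hd_uniq z (Ioo_subset_Icc_self hz) (by simp [rpowMulBesselJ, hJz])
  · exact he_uniq z (Ioo_subset_Icc_self hz) (by simp [rpowMulBesselJ, hJz])

theorem besselJ_interlacing_small_general (k : ℝ) (hk : -1 < k) (a b : ℝ)
    (ha : 0 < a)
    (hza : besselJ (k + 1) a = 0)
    (hne : ∀ r ∈ Set.Ioo a b, besselJ (k + 1) r ≠ 0)
    (c : ℝ) (hc : c ∈ Set.Ioo a b) (hzc : besselJ k c = 0)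
    (hcr : c < 2 * Real.sqrt ((k + 1) * (k + 2))) :
    (∃! d, d ∈ Set.Ioo a b ∧ besselJ (k + 2) d = 0) ∧
    (∃! e, e ∈ Set.Ioo a b ∧ besselJ (k + 3) e = 0) ∧
    ∀ d e, d ∈ Set.Ioo a b → besselJ (k + 2) d = 0 →
      e ∈ Set.Ioo a b → besselJ (k + 3) e = 0 →
        a < d ∧ d < e ∧ e < c ∧ c < b := by
  have hcont : ContinuousOn (besselJ (k + 1)) (Ioo a b) := fun r hr =>
    (hasDerivAt_besselJ (by linarith) (ha.trans hr.1)).continuousAt.continuousWithinAt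
  obtain ⟨ε, hε⟩ := exists_mul_pos_of_ne_zero isPreconnected_Ioo hcont hne
  have hcr' : c ^ 2 < 4 * ((k + 1) * (k + 2)) := by
    have h := pow_lt_pow_left₀ hcr (ha.trans hc.1).le two_ne_zero
    rwa [mul_pow, sq_sqrt (by nlinarith), show (2 : ℝ) ^ 2 = 4 by norm_num] at h
  obtain ⟨d, hd, e, he, hJd, hJe, hd_uniq, he_uniq⟩ :=
    besselJ_interlacing_of_mul_pos hk ha hza hε hc hzc hcr'
  refine ⟨⟨d, ⟨⟨hd.1, hd.2.trans hc.2⟩, hJd⟩, fun z hz => hd_uniq z hz.1 hz.2⟩,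
    ⟨e, ⟨⟨hd.1.trans he.1, he.2.trans hc.2⟩, hJe⟩, fun z hz => he_uniq z hz.1 hz.2⟩,
    fun d' e' hd' hJd' he' hJe' => ?_⟩
  rw [hd_uniq d' hd' hJd', he_uniq e' he' hJe']
  exact ⟨hd.1, he.1, he.2, hc.2⟩

/-- Interlacing of the zeros of `J_{k+2}`, `J_{k+3}` with those of `J_k` between consecutive
zeros of `J_{k+1}`, in the case `c < 2√((k+1)(k+2))`. -/
theorem besselJ_interlacing_small (k : ℝ) (hk : -1 < k) (a b : ℝ)
    (ha : 0 < a) (hab : a < b)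
    (hza : besselJ (k + 1) a = 0) (hzb : besselJ (k + 1) b = 0)
    (hne : ∀ r ∈ Set.Ioo a b, besselJ (k + 1) r ≠ 0)
    (c : ℝ) (hc : c ∈ Set.Ioo a b) (hzc : besselJ k c = 0)
    (hcr : c < 2 * Real.sqrt ((k + 1) * (k + 2))) :
    (∃! d, d ∈ Set.Ioo a b ∧ besselJ (k + 2) d = 0) ∧
    (∃! e, e ∈ Set.Ioo a b ∧ besselJ (k + 3) e = 0) ∧
    ∀ d e, d ∈ Set.Ioo a b → besselJ (k + 2) d = 0 →
      e ∈ Set.Ioo a b → besselJ (k + 3) e = 0 →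
        a < d ∧ d < e ∧ e < c ∧ c < b :=
  besselJ_interlacing_small_general k hk a b ha hza hne c hc hzc hcr
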